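/- arXiv:2003.08935 — 2 statements merged into one kernel-verified Lean document; each statement's English description precedes it below -/
import Mathlib

section
/- Let g : ℝ → (-∞, ∞] be proper, closed, convex with dom(g) ⊆ [0, ∞), and define f : ℝⁿ → (-∞, ∞] by f(x) = g(‖x‖₂). Then for any nonzero x ∈ ℝⁿ and λ > 0, prox_{λf}(x) = prox_{λg}(‖x‖₂) · (x / ‖x‖₂). -/
/-! By the reverse triangle inequality, `‖x - v‖² ≥ (‖x‖ - ‖v‖)²`, so the objective of `prox_{λf}`
at `v` dominates the one-dimensional objective of `prox_{λg}` at `‖v‖`, which in turn dominates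
its minimum at `y`. For `y ≥ 0` the point `y • x / ‖x‖` attains this minimum: it has norm `y`
and lies at distance `|‖x‖ - y|` from `x`. For `y < 0` we have `g y = ⊤`, so the right-hand
side is `⊤`. -/

section RadialPoint

variable {E : Type*} [NormedAddCommGroup E] [NormedSpace ℝ E] {x : E}

theorem norm_smul_inv_norm_smul (hx : x ≠ 0) (t : ℝ) : ‖t • ‖x‖⁻¹ • x‖ = |t| := by
  rw [norm_smul, norm_smul, norm_inv, norm_norm, inv_mul_cancel₀ (norm_ne_zero_iff.mpr hx),
    mul_one, Real.norm_eq_abs]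

theorem norm_sub_smul_inv_norm_smul (hx : x ≠ 0) (t : ℝ) :
    ‖x - t • ‖x‖⁻¹ • x‖ = |‖x‖ - t| := by
  have hradial : x - t • ‖x‖⁻¹ • x = (‖x‖ - t) • ‖x‖⁻¹ • x := by
    rw [sub_smul, smul_inv_smul₀ (norm_ne_zero_iff.mpr hx)]
  rw [hradial, norm_smul_inv_norm_smul hx]

end RadialPoint

theorem sq_norm_sub_norm_le_sq_norm_sub {E : Type*} [SeminormedAddCommGroup E] (x v : E) :
    (‖x‖ - ‖v‖) ^ 2 ≤ ‖x - v‖ ^ 2 :=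
  sq_le_sq.mpr ((abs_norm_sub_norm_le x v).trans_eq (abs_norm _).symm)

theorem prox_of_norm_composition_general (n : ℕ) (g : ℝ → EReal)
    (hdom : ∀ t : ℝ, t < 0 → g t = ⊤)
    (lam : ℝ) (hlam : 0 < lam)
    (x : EuclideanSpace ℝ (Fin n)) (hx : x ≠ 0)
    (y : ℝ)
    (hy : ∀ t : ℝ, g y + ((1 / (2 * lam)) * (‖x‖ - y) ^ 2 : ℝ) ≤
      g t + ((1 / (2 * lam)) * (‖x‖ - t) ^ 2 : ℝ)) :
    ∀ v : EuclideanSpace ℝ (Fin n),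
      g ‖y • ‖x‖⁻¹ • x‖ + ((1 / (2 * lam)) * ‖x - y • ‖x‖⁻¹ • x‖ ^ 2 : ℝ) ≤
      g ‖v‖ + ((1 / (2 * lam)) * ‖x - v‖ ^ 2 : ℝ) := by
  intro v
  have hpenalty : ((1 / (2 * lam)) * (‖x‖ - ‖v‖) ^ 2 : ℝ) ≤ (1 / (2 * lam)) * ‖x - v‖ ^ 2 :=
    mul_le_mul_of_nonneg_left (sq_norm_sub_norm_le_sq_norm_sub x v) (by positivity)
  have hmin : g y + ((1 / (2 * lam)) * (‖x‖ - y) ^ 2 : ℝ) ≤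
      g ‖v‖ + ((1 / (2 * lam)) * ‖x - v‖ ^ 2 : ℝ) :=
    (hy ‖v‖).trans (add_le_add_right (EReal.coe_le_coe_iff.mpr hpenalty) _)
  rcases lt_or_ge y 0 with hneg | hnonneg
  · rw [hdom y hneg, EReal.top_add_coe, top_le_iff] at hmin
    exact hmin ▸ le_top
  · rwa [norm_smul_inv_norm_smul hx, norm_sub_smul_inv_norm_smul hx, abs_of_nonneg hnonneg,
      sq_abs]

/-- Beck's theorem: the prox of `f(x) = g(‖x‖)` for a proper closed convex `g` with
domain contained in `[0, ∞)` is obtained by applying the 1D prox of `g` to `‖x‖`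
and rescaling the direction `x/‖x‖`. Minimizers are stated via universally
quantified inequalities. -/
theorem prox_of_norm_composition (n : ℕ) (g : ℝ → EReal)
    (hproper₁ : ∀ t : ℝ, g t ≠ ⊥) (hproper₂ : ∃ t : ℝ, g t ≠ ⊤)
    (hclosed : LowerSemicontinuous g)
    (hconvex : ∀ u v a b : ℝ, 0 ≤ a → 0 ≤ b → a + b = 1 →
      g (a * u + b * v) ≤ (a : EReal) * g u + (b : EReal) * g v)
    (hdom : ∀ t : ℝ, t < 0 → g t = ⊤)
    (lam : ℝ) (hlam : 0 < lam)
    (x : EuclideanSpace ℝ (Fin n)) (hx : x ≠ 0)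
    (y : ℝ)
    (hy : ∀ t : ℝ, g y + ((1 / (2 * lam)) * (‖x‖ - y) ^ 2 : ℝ) ≤
      g t + ((1 / (2 * lam)) * (‖x‖ - t) ^ 2 : ℝ)) :
    ∀ v : EuclideanSpace ℝ (Fin n),
      g ‖y • ‖x‖⁻¹ • x‖ + ((1 / (2 * lam)) * ‖x - y • ‖x‖⁻¹ • x‖ ^ 2 : ℝ) ≤
      g ‖v‖ + ((1 / (2 * lam)) * ‖x - v‖ ^ 2 : ℝ) :=
  prox_of_norm_composition_general n g hdom lam hlam x hx y hy
end

section
/- For the one-dimensional ℓ_{1/2} penalty f(v) = |v|^{1/2} and λ > 0: if |x| ≤ (54^{1/3}/4)·λ^{2/3}, then v = 0 is a global minimizer of λ|v|^{1/2} + (1/2)(x - v)². -/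
/-- Zero branch of the half-thresholding operator: if `|x| ≤ (54^(1/3)/4) λ^(2/3)`,
then `v = 0` is a global minimizer of `v ↦ λ|v|^(1/2) + (1/2)(x - v)²`. -/
theorem half_thresholding_zero_branch (lam x : ℝ) (hlam : 0 < lam)
    (hx : |x| ≤ ((54 : ℝ) ^ ((1 : ℝ) / 3) / 4) * lam ^ ((2 : ℝ) / 3)) :
    ∀ v : ℝ,
      lam * |(0 : ℝ)| ^ ((1 : ℝ) / 2) + (1 / 2) * (x - 0) ^ 2 ≤
      lam * |v| ^ ((1 : ℝ) / 2) + (1 / 2) * (x - v) ^ 2 := by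
  intro v
  set a : ℝ := lam ^ ((1 : ℝ) / 3) with ha
  set s : ℝ := |v| ^ ((1 : ℝ) / 2) with hs
  have ha0 : 0 ≤ a := Real.rpow_nonneg hlam.le _
  have hs0 : 0 ≤ s := Real.rpow_nonneg (abs_nonneg v) _
  have ha3 : a ^ 3 = lam := by
    rw [ha, ← Real.rpow_natCast (lam ^ ((1:ℝ)/3)) 3, ← Real.rpow_mul hlam.le]
    norm_num
  have ha2 : lam ^ ((2 : ℝ) / 3) = a ^ 2 := by
    rw [ha, ← Real.rpow_natCast (lam ^ ((1:ℝ)/3)) 2, ← Real.rpow_mul hlam.le]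
    norm_num
  have hs2 : s ^ 2 = |v| := by
    rw [hs, ← Real.rpow_natCast (|v| ^ ((1:ℝ)/2)) 2, ← Real.rpow_mul (abs_nonneg v)]
    norm_num
  have hv2 : v ^ 2 = s ^ 4 := by
    have : v ^ 2 = |v| ^ 2 := (sq_abs v).symm
    rw [this, ← hs2]; ring
  have hc : (54 : ℝ) ^ ((1 : ℝ) / 3) ≤ 6 := by
    have h1 : (54 : ℝ) ^ ((1 : ℝ) / 3) ≤ (216 : ℝ) ^ ((1 : ℝ) / 3) :=
      Real.rpow_le_rpow (by norm_num) (by norm_num) (by norm_num)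
    have h2 : (216 : ℝ) ^ ((1 : ℝ) / 3) = 6 := by
      rw [show (216 : ℝ) = (6 : ℝ) ^ (3 : ℕ) by norm_num,
        ← Real.rpow_natCast (6 : ℝ) 3, ← Real.rpow_mul (by norm_num)]
      norm_num
    linarith
  have hx' : |x| ≤ (3 / 2) * a ^ 2 := by
    rw [ha2] at hx
    nlinarith [sq_nonneg a]
  have hxv : x * v ≤ |x| * s ^ 2 := by
    rw [hs2]
    calc x * v ≤ |x * v| := le_abs_self _
      _ = |x| * |v| := abs_mul x v
  have hamgm : 0 ≤ s * (s - a) ^ 2 * (s + 2 * a) := by positivity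
  have h0 : |(0 : ℝ)| ^ ((1 : ℝ) / 2) = 0 := by
    simp [Real.zero_rpow]
  rw [h0]
  nlinarith [mul_nonneg hs0 (sq_nonneg a), sq_nonneg s, sq_nonneg (x - v)]
end
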